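/- In the bilinear group setting of the Chinese IBS verification, two valid forgeries at the same position imply: if e(S₁, Q)·g^{h'} = e(S₂, Q)·g^{h''} with h' ≠ h'', Q = (w* + α)·P₂, and g = e(P̂₁, α·P̂₂), then e((h'' - h')⁻¹·(S₁ - S₂), Q) = g, i.e., (h''-h')⁻¹·(S₁ - S₂) = (α/(w* + α))·P̂₁. -/
import Mathlib


theorem forgery_extraction (p : ℕ) [Fact p.Prime]
    (G₁ G₂ GT : Type*) [AddCommGroup G₁] [AddCommGroup G₂] [AddCommGroup GT]
    [Module (ZMod p) G₁] [Module (ZMod p) G₂] [Module (ZMod p) GT]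
    (e : G₁ →ₗ[ZMod p] G₂ →ₗ[ZMod p] GT)
    (Phat₁ : G₁) (Phat₂ : G₂) (α wstar h' h'' : ZMod p)
    (hwa : wstar + α ≠ 0) (hne : h' ≠ h'')
    (S₁ S₂ : G₁) (Q : G₂) (g : GT)
    (hQ : Q = (wstar + α) • Phat₂)
    (hg : g = e Phat₁ (α • Phat₂))
    (hforge : e S₁ Q + h' • g = e S₂ Q + h'' • g)
    (hnondeg : Function.Injective fun S : G₁ => e S Q) :
    e ((h'' - h')⁻¹ • (S₁ - S₂)) Q = g ∧
      (h'' - h')⁻¹ • (S₁ - S₂) = (α * (wstar + α)⁻¹) • Phat₁ := by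
  have hd : h'' - h' ≠ 0 := sub_ne_zero.mpr (Ne.symm hne)
  have h1 : e (S₁ - S₂) Q = (h'' - h') • g := by
    rw [map_sub, LinearMap.sub_apply, sub_smul]
    exact sub_eq_sub_iff_add_eq_add.mpr (hforge.trans (add_comm _ _))
  have hmain : e ((h'' - h')⁻¹ • (S₁ - S₂)) Q = g := by
    rw [map_smul, LinearMap.smul_apply, h1, smul_smul, inv_mul_cancel₀ hd, one_smul]
  refine ⟨hmain, hnondeg ?_⟩
  simp only
  rw [hmain, hQ, hg]
  simp only [map_smul, LinearMap.smul_apply, smul_smul]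
  congr 1
  field_simp
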